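/- arXiv:0806.4873 — 4 statements merged into one kernel-verified Lean document; each statement's English description precedes it below -/
import Mathlib

section
/- Φ(0) = √512/15, i.e., ∫₀^∞ y^{1/2} ( √(y(y+2)) − (y+1) + 1/(2y) ) dy = √512/15 = 16√2/15. -/
/-!
In the variable `d = √(y + 2) - √y`, which decreases from `√2` to `0` as `y` runs over
`(0, ∞)`, the integrand becomes a polynomial: `g(y) dy = (-1 - d²/4 + d⁴/8) dd`. Hence
`F = -d - d³/12 + d⁵/40` is an explicit antiderivative of `g`, it tends to `0` at infinity,
and `g > 0`, so the improper fundamental theorem of calculus gives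
`∫ g = -F(0) = √2 + √2³/12 - √2⁵/40 = 16√2/15`.
-/

open Real MeasureTheory Set Filter Topology

noncomputable def sqrtGap (y : ℝ) : ℝ := √(y + 2) - √y

noncomputable def phiPrimitive (y : ℝ) : ℝ :=
  -sqrtGap y - sqrtGap y ^ 3 / 12 + sqrtGap y ^ 5 / 40

noncomputable def phiIntegrand (y : ℝ) : ℝ := √y * (√(y * (y + 2)) - (y + 1) + 1 / (2 * y))

lemma continuous_phiPrimitive : Continuous phiPrimitive := by
  unfold phiPrimitive sqrtGap
  fun_prop

lemma sqrtGap_eq_div {y : ℝ} (hy : 0 ≤ y) : sqrtGap y = 2 / (√(y + 2) + √y) := by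
  have hpos : 0 < √(y + 2) + √y := by positivity
  rw [sqrtGap, eq_div_iff hpos.ne']
  linear_combination sq_sqrt (show 0 ≤ y + 2 by linarith) - sq_sqrt hy

lemma tendsto_sqrtGap_atTop : Tendsto sqrtGap atTop (𝓝 0) := by
  have hsum : Tendsto (fun y : ℝ => √(y + 2) + √y) atTop atTop :=
    tendsto_atTop_mono (fun y => le_add_of_nonneg_left (sqrt_nonneg _)) tendsto_sqrt_atTop
  refine ((tendsto_const_nhds (x := (2 : ℝ))).div_atTop hsum).congr' ?_
  filter_upwards [eventually_ge_atTop 0] with y hy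
  exact (sqrtGap_eq_div hy).symm

lemma tendsto_phiPrimitive_atTop : Tendsto phiPrimitive atTop (𝓝 0) := by
  have h := tendsto_sqrtGap_atTop
  have := (h.neg.sub ((h.pow 3).div_const 12)).add ((h.pow 5).div_const 40)
  norm_num at this
  exact this

lemma phiPrimitive_zero : phiPrimitive 0 = -(16 * √2 / 15) := by
  have h2 : √2 ^ 2 = 2 := sq_sqrt (by norm_num)
  simp only [phiPrimitive, sqrtGap, zero_add, sqrt_zero, sub_zero]
  linear_combination (√2 ^ 3 / 40 - √2 / 30) * h2

lemma phiIntegrand_sq {a : ℝ} (ha : 0 < a) :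
    phiIntegrand (a ^ 2) = a ^ 2 * √(a ^ 2 + 2) - a ^ 3 - a + 1 / (2 * a) := by
  rw [phiIntegrand, sqrt_mul (sq_nonneg a), sqrt_sq ha.le]
  field_simp
  ring

lemma phiIntegrand_pos {y : ℝ} (hy : 0 < y) : 0 < phiIntegrand y := by
  obtain ⟨a, ha, rfl⟩ : ∃ a, 0 < a ∧ a ^ 2 = y := ⟨√y, sqrt_pos.2 hy, sq_sqrt hy.le⟩
  set b := √(a ^ 2 + 2)
  have hab : a ≤ b := le_sqrt_of_sq_le (by linarith)
  have hb : b ^ 2 = a ^ 2 + 2 := sq_sqrt (by positivity)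
  -- `a * b - a ^ 2 - 1 = -1 / (a * b + a ^ 2 + 1)` because `b ^ 2 = a ^ 2 + 2`
  have hkey : (2 * a ^ 3 * b - 2 * a ^ 4 - 2 * a ^ 2 + 1) * (a * b + a ^ 2 + 1)
      = a * (b - a) + 1 := by
    linear_combination (2 * a ^ 4) * hb
  have hP : 0 < 2 * a ^ 3 * b - 2 * a ^ 4 - 2 * a ^ 2 + 1 := by
    refine pos_of_mul_pos_left ?_ (by positivity : (0 : ℝ) ≤ a * b + a ^ 2 + 1)
    rw [hkey]
    nlinarith [mul_nonneg ha.le (sub_nonneg.2 hab)]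
  rw [phiIntegrand_sq ha, show a ^ 2 * b - a ^ 3 - a + 1 / (2 * a)
    = (2 * a ^ 3 * b - 2 * a ^ 4 - 2 * a ^ 2 + 1) / (2 * a) by field_simp]
  positivity

lemma hasDerivAt_sqrtGap {y : ℝ} (hy : 0 < y) :
    HasDerivAt sqrtGap (1 / (2 * √(y + 2)) - 1 / (2 * √y)) y :=
  (((hasDerivAt_id y).add_const 2).sqrt (by positivity)).sub ((hasDerivAt_id y).sqrt hy.ne')

lemma hasDerivAt_phiPrimitive {y : ℝ} (hy : 0 < y) :
    HasDerivAt phiPrimitive (phiIntegrand y) y := by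
  have hd := hasDerivAt_sqrtGap hy
  refine ((hd.neg.sub ((hd.pow 3).div_const 12)).add ((hd.pow 5).div_const 40)).congr_deriv ?_
  obtain ⟨a, ha, rfl⟩ : ∃ a, 0 < a ∧ a ^ 2 = y := ⟨√y, sqrt_pos.2 hy, sq_sqrt hy.le⟩
  rw [phiIntegrand_sq ha, sqrtGap, sqrt_sq ha.le]
  set b := √(a ^ 2 + 2)
  have hb0 : 0 < b := sqrt_pos.2 (by positivity)
  have hb : b ^ 2 = a ^ 2 + 2 := sq_sqrt (by positivity)
  field_simp
  linear_combination (-60 * b ^ 3 + 300 * a * b ^ 2 - 660 * a ^ 2 * b + 240 * a - 60 * a ^ 3) * hb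

theorem phi_zero_value :
    ∫ y in Set.Ioi (0:ℝ),
        Real.sqrt y * (Real.sqrt (y * (y + 2)) - (y + 1) + 1/(2*y))
      = Real.sqrt 512 / 15 := by
  have hFTC : ∫ y in Ioi (0 : ℝ), phiIntegrand y = 0 - phiPrimitive 0 :=
    integral_Ioi_of_hasDerivAt_of_nonneg continuous_phiPrimitive.continuousWithinAt
      (fun _ hy => hasDerivAt_phiPrimitive hy) (fun _ hy => (phiIntegrand_pos hy).le)
      tendsto_phiPrimitive_atTop
  have h512 : √512 = 16 * √2 := by
    rw [show (512 : ℝ) = 16 ^ 2 * 2 by norm_num, sqrt_mul (by positivity), sqrt_sq (by norm_num)]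
  rw [h512]
  exact hFTC.trans (by rw [phiPrimitive_zero]; ring)
end

section
/- For every y > 0 and h ≥ 0, the integrand y^{1/2} ( √((y+2h)(y+2+2h)) − (y+1+2h) + 1/(2y) ) is strictly positive. -/
/-
With a = y + 1 + 2h the radicand is a² - 1, and a - √(a² - 1) = 1 / (a + √(a² - 1)).
Since a > y and √(a² - 1) ≥ √(y(y + 2)) > y, the denominator exceeds 2y, so
a - √(a² - 1) < 1 / (2y).
-/

theorem sub_sqrt_sq_sub_one_eq_inv {a : ℝ} (ha : 1 ≤ a) :
    a - √(a ^ 2 - 1) = (a + √(a ^ 2 - 1))⁻¹ := by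
  have hs : √(a ^ 2 - 1) ^ 2 = a ^ 2 - 1 := Real.sq_sqrt (by nlinarith)
  exact eq_inv_of_mul_eq_one_left (by nlinarith)

theorem sub_sqrt_sq_sub_one_lt_inv {a c : ℝ} (ha : 1 ≤ a) (hc : 0 < c)
    (hlt : c < a + √(a ^ 2 - 1)) : a - √(a ^ 2 - 1) < c⁻¹ := by
  rw [sub_sqrt_sq_sub_one_eq_inv ha]
  exact inv_strictAnti₀ hc hlt

theorem phi_integrand_pos (h y : ℝ) (hh : 0 ≤ h) (hy : 0 < y) :
    0 < Real.sqrt y *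
      (Real.sqrt ((y + 2*h) * (y + 2 + 2*h)) - (y + 1 + 2*h) + 1/(2*y)) := by
  set a := y + 1 + 2*h
  have hrad : (y + 2*h) * (y + 2 + 2*h) = a ^ 2 - 1 := by ring
  have hy_le_sqrt : y ≤ √(a ^ 2 - 1) := Real.le_sqrt_of_sq_le (by nlinarith)
  have hlt : a - √(a ^ 2 - 1) < (2 * y)⁻¹ :=
    sub_sqrt_sq_sub_one_lt_inv (by linarith) (by positivity) (by linarith)
  rw [hrad, one_div]
  exact mul_pos (Real.sqrt_pos.mpr hy) (by linarith)
end

section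
/- For real a, b, c with a + 2b > 0 and a + 2c > 0, one has (1/2)( √((a+2b)(a+2c)) − (a+b+c) ) ≤ F(e) for all e < 1/2, where F(e) = a e²/(1−2e) + b e/(1−2e) − c e. -/
open Real

/-! With `t = 1 - 2e > 0` the right-hand side equals `((a + 2b)/t + (a + 2c) t)/4 - (a + b + c)/2`,
and AM-GM bounds `(a + 2b)/t + (a + 2c) t` below by `2 √((a + 2b)(a + 2c))`. -/

lemma two_mul_sqrt_mul_le_div_add_mul {A B t : ℝ} (hA : 0 ≤ A) (hB : 0 ≤ B) (ht : 0 < t) :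
    2 * √(A * B) ≤ A / t + B * t := by
  have hsplit : √(A * B) = √(A / t) * √(B * t) := by
    rw [← sqrt_mul (div_nonneg hA ht.le)]
    congr 1
    field_simp
  rw [hsplit, ← mul_assoc]
  calc 2 * √(A / t) * √(B * t) ≤ √(A / t) ^ 2 + √(B * t) ^ 2 := two_mul_le_add_sq _ _
    _ = A / t + B * t := by
      rw [sq_sqrt (div_nonneg hA ht.le), sq_sqrt (mul_nonneg hB ht.le)]

lemma quadratic_type_eq (a b c e : ℝ) (he : 1 - 2 * e ≠ 0) :
    a * e ^ 2 / (1 - 2 * e) + b * e / (1 - 2 * e) - c * e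
      = ((a + 2 * b) / (1 - 2 * e) + (a + 2 * c) * (1 - 2 * e)) / 4 - (a + b + c) / 2 := by
  generalize ht : 1 - 2 * e = t at he ⊢
  obtain rfl : e = (1 - t) / 2 := by linarith
  field_simp
  ring

theorem lower_bound_quadratic_type (a b c : ℝ) (hab : 0 < a + 2*b) (hac : 0 < a + 2*c) :
    ∀ e : ℝ, e < 1/2 →
      (1/2) * (Real.sqrt ((a + 2*b) * (a + 2*c)) - (a + b + c))
        ≤ a * e^2 / (1 - 2*e) + b * e / (1 - 2*e) - c * e := by
  intro e he
  have ht : 0 < 1 - 2 * e := by linarith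
  rw [quadratic_type_eq a b c e ht.ne']
  linarith [two_mul_sqrt_mul_le_div_add_mul hab.le hac.le ht]
end

section
/- For all y > 0 and h ≥ 0: 0 < y^{1/2} ( 1/(2y) − 1/( √((y+2h)(y+2+2h)) + y + 1 + 2h ) ) ≤ min( y^{-1/2}/2, C y^{-3/2} ) for some constant C > 0 independent of y (C may depend on h). -/
open Real

/-!
With `a = y + 2h ≥ 0` we have `a ≤ √(a(a+2)) ≤ a + 1`, so the denominator `D` lies between
`2y + 1 + 4h` and `2y + 2 + 4h`. Hence `0 < 1/(2y) - 1/D ≤ (D - 2y)/(2y)² ≤ (1 + 2h)/(2y²)`,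
which gives both bounds with `C = (1 + 2h)/2`.
-/

theorem le_sqrt_mul_add_two {a : ℝ} (ha : 0 ≤ a) : a ≤ √(a * (a + 2)) :=
  Real.le_sqrt_of_sq_le (by nlinarith)

theorem sqrt_mul_add_two_le {a : ℝ} (ha : -1 ≤ a) : √(a * (a + 2)) ≤ a + 1 :=
  Real.sqrt_le_iff.2 ⟨by linarith, by nlinarith⟩

theorem one_div_sub_one_div_le_div_sq {a b : ℝ} (ha : 0 < a) (hab : a ≤ b) :
    1 / a - 1 / b ≤ (b - a) / a ^ 2 := by
  rw [div_sub_div _ _ ha.ne' (ha.trans_le hab).ne', one_mul, mul_one, sq]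
  exact div_le_div_of_nonneg_left (by linarith) (by positivity) (by nlinarith)

theorem sqrt_div_pow_eq_rpow {y : ℝ} (hy : 0 < y) (n : ℕ) :
    √y / y ^ n = y ^ ((1 : ℝ) / 2 - n) := by
  rw [Real.rpow_sub hy, Real.rpow_natCast, Real.sqrt_eq_rpow]

theorem integrand_bounds (h : ℝ) (hh : 0 ≤ h) :
    ∃ C : ℝ, 0 < C ∧ ∀ y : ℝ, 0 < y →
      0 < Real.sqrt y *
            (1/(2*y) - 1/(Real.sqrt ((y + 2*h) * (y + 2 + 2*h)) + y + 1 + 2*h))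
        ∧ Real.sqrt y *
            (1/(2*y) - 1/(Real.sqrt ((y + 2*h) * (y + 2 + 2*h)) + y + 1 + 2*h))
          ≤ min (y ^ (-(1:ℝ)/2) / 2) (C * y ^ (-(3:ℝ)/2)) := by
  refine ⟨(1 + 2 * h) / 2, by positivity, fun y hy => ?_⟩
  have hshift : y + 2 + 2 * h = (y + 2 * h) + 2 := by ring
  set D := √((y + 2 * h) * (y + 2 + 2 * h)) + y + 1 + 2 * h
  have hD_gt : 2 * y < D := by
    have := le_sqrt_mul_add_two (a := y + 2 * h) (by positivity)
    rw [← hshift] at this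
    linarith
  have hD_le : D ≤ 2 * y + (2 + 4 * h) := by
    have := sqrt_mul_add_two_le (a := y + 2 * h) (by linarith)
    rw [← hshift] at this
    linarith
  have hgap : 0 < 1 / (2 * y) - 1 / D := sub_pos.2 (one_div_lt_one_div_of_lt (by positivity) hD_gt)
  refine ⟨mul_pos (Real.sqrt_pos.2 hy) hgap, le_min ?_ ?_⟩
  · have : 0 < 1 / D := one_div_pos.2 (by linarith)
    calc √y * (1 / (2 * y) - 1 / D) ≤ √y * (1 / (2 * y)) :=
          mul_le_mul_of_nonneg_left (by linarith) (Real.sqrt_nonneg y)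
      _ = √y / y ^ 1 / 2 := by ring
      _ = y ^ (-(1:ℝ)/2) / 2 := by rw [sqrt_div_pow_eq_rpow hy]; norm_num
  · calc √y * (1 / (2 * y) - 1 / D) ≤ √y * ((2 + 4 * h) / (2 * y) ^ 2) := by
          refine mul_le_mul_of_nonneg_left ?_ (Real.sqrt_nonneg y)
          refine (one_div_sub_one_div_le_div_sq (by positivity) hD_gt.le).trans ?_
          exact div_le_div_of_nonneg_right (by linarith) (by positivity)
      _ = (1 + 2 * h) / 2 * (√y / y ^ 2) := by ring
      _ = (1 + 2 * h) / 2 * y ^ (-(3:ℝ)/2) := by rw [sqrt_div_pow_eq_rpow hy]; norm_num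
end
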